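/- arXiv:1605.02577 — 5 statements merged into one kernel-verified Lean document; each statement's English description precedes it below -/
import Mathlib

section
/- Under the moving-frame hypotheses, the angle function θ(t) = arccos ⟨N(t), h⟩ is differentiable and its derivative satisfies θ'(t₀) = ⟨N'(t₀), T⊥(t₀)⟩ at every t₀ (equivalently, in the paper's notation, D_V θ = −II(V, T⊥)). -/
/-!
Since θ = arccos ⟨N, h⟩, the chain rule gives θ' = -⟨N', h⟩ / sin θ. On the other side, the
BAC–CAB rule gives T⊥ = N × (N × h) / sin θ = (⟨N, h⟩ N - h) / sin θ, and ⟨N', N⟩ = 0 because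
N stays on the unit sphere, so ⟨N', T⊥⟩ = -⟨N', h⟩ / sin θ as well.
-/

open scoped InnerProductSpace
open Real

/-- Cross product on ℝ³ (Euclidean space). -/
noncomputable def cross3 (a b : EuclideanSpace ℝ (Fin 3)) : EuclideanSpace ℝ (Fin 3) :=
  (WithLp.equiv 2 (Fin 3 → ℝ)).symm
    ![a 1 * b 2 - a 2 * b 1, a 2 * b 0 - a 0 * b 2, a 0 * b 1 - a 1 * b 0]

open Matrix

theorem cross3_eq_toLp_crossProduct (a b : EuclideanSpace ℝ (Fin 3)) :
    cross3 a b = WithLp.toLp 2 (a.ofLp ⨯₃ b.ofLp) := by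
  rw [cross_apply]
  rfl

theorem cross3_smul_right (a b : EuclideanSpace ℝ (Fin 3)) (s : ℝ) :
    cross3 a (s • b) = s • cross3 a b := by
  simp only [cross3_eq_toLp_crossProduct, WithLp.ofLp_smul, map_smul, WithLp.toLp_smul]

theorem cross3_cross3 (a b c : EuclideanSpace ℝ (Fin 3)) :
    cross3 a (cross3 b c) = ⟪a, c⟫_ℝ • b - ⟪a, b⟫_ℝ • c := by
  rw [cross3_eq_toLp_crossProduct, cross3_eq_toLp_crossProduct, WithLp.ofLp_toLp,
    cross_cross_eq_smul_sub_smul', EuclideanSpace.inner_eq_star_dotProduct,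
    EuclideanSpace.inner_eq_star_dotProduct]
  simp [dotProduct_comm]

theorem inner_deriv_self_eq_zero_of_norm_eq {E : Type*} [NormedAddCommGroup E]
    [InnerProductSpace ℝ E] {N : ℝ → E} {r : ℝ} (hN : ∀ t, ‖N t‖ = r) {t₀ : ℝ}
    (hd : DifferentiableAt ℝ N t₀) : ⟪deriv N t₀, N t₀⟫_ℝ = 0 := by
  have hnorm_sq := hd.hasDerivAt.norm_sq
  simp only [hN] at hnorm_sq
  have := hnorm_sq.unique (hasDerivAt_const t₀ (r ^ 2))
  rw [real_inner_comm]
  linarith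

theorem HasDerivAt.arccos {f : ℝ → ℝ} {f' x : ℝ} (hf : HasDerivAt f f' x) (h₁ : f x ≠ -1)
    (h₂ : f x ≠ 1) : HasDerivAt (fun t => arccos (f t)) (-(1 / √(1 - f x ^ 2)) * f') x :=
  (hasDerivAt_arccos h₁ h₂).comp x hf

theorem deriv_angle_eq_general
    (h : EuclideanSpace ℝ (Fin 3))
    (N : ℝ → EuclideanSpace ℝ (Fin 3)) (hND : Differentiable ℝ N)
    (hNu : ∀ t, ‖N t‖ = 1) (hNh : ∀ t, |⟪N t, h⟫_ℝ| < 1)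
    (θ : ℝ → ℝ) (hθ : ∀ t, θ t = Real.arccos ⟪N t, h⟫_ℝ)
    (T₀ : ℝ → EuclideanSpace ℝ (Fin 3))
    (hT₀ : ∀ t, T₀ t = (Real.sin (θ t))⁻¹ • cross3 (N t) h)
    (Tperp : ℝ → EuclideanSpace ℝ (Fin 3))
    (hTp : ∀ t, Tperp t = cross3 (N t) (T₀ t)) :
    Differentiable ℝ θ ∧ ∀ t₀, deriv θ t₀ = ⟪deriv N t₀, Tperp t₀⟫_ℝ := by
  suffices key : ∀ t, HasDerivAt θ ⟪deriv N t, Tperp t⟫_ℝ t from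
    ⟨fun t => (key t).differentiableAt, fun t => (key t).deriv⟩
  intro t
  obtain ⟨hgt, hlt⟩ := abs_lt.mp (hNh t)
  have hinner : HasDerivAt (fun s => ⟪N s, h⟫_ℝ) ⟪deriv N t, h⟫_ℝ t := by
    simpa using (hND t).hasDerivAt.inner ℝ (hasDerivAt_const t h)
  have hTperp :
      ⟪deriv N t, Tperp t⟫_ℝ = -(1 / √(1 - ⟪N t, h⟫_ℝ ^ 2)) * ⟪deriv N t, h⟫_ℝ := by
    rw [hTp, hT₀, cross3_smul_right, cross3_cross3, inner_smul_right, inner_sub_right,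
      inner_smul_right, inner_smul_right, inner_deriv_self_eq_zero_of_norm_eq hNu (hND t),
      real_inner_self_eq_norm_sq, hNu, hθ, sin_arccos]
    ring
  rw [funext hθ, hTperp]
  exact hinner.arccos hgt.ne' hlt.ne

/-- along a differentiable curve of unit normals N(t), the angle
θ(t) = arccos⟨N(t), h⟩ is differentiable with θ'(t₀) = ⟨N'(t₀), Tperp(t₀)⟩
(i.e., D_V θ = −II(V, Tperp)). -/
theorem deriv_angle_eq
    (h : EuclideanSpace ℝ (Fin 3)) (hh : ‖h‖ = 1)
    (N : ℝ → EuclideanSpace ℝ (Fin 3)) (hND : Differentiable ℝ N)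
    (hNu : ∀ t, ‖N t‖ = 1) (hNh : ∀ t, |⟪N t, h⟫_ℝ| < 1)
    (θ : ℝ → ℝ) (hθ : ∀ t, θ t = Real.arccos ⟪N t, h⟫_ℝ)
    (T₀ : ℝ → EuclideanSpace ℝ (Fin 3))
    (hT₀ : ∀ t, T₀ t = (Real.sin (θ t))⁻¹ • cross3 (N t) h)
    (Tperp : ℝ → EuclideanSpace ℝ (Fin 3))
    (hTp : ∀ t, Tperp t = cross3 (N t) (T₀ t)) :
    Differentiable ℝ θ ∧ ∀ t₀, deriv θ t₀ = ⟪deriv N t₀, Tperp t₀⟫_ℝ :=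
  deriv_angle_eq_general h N hND hNu hNh θ hθ T₀ hT₀ Tperp hTp
end

section
/- Under the moving-frame hypotheses, the horizontal normal n(t) is differentiable and its derivative satisfies n'(t₀) = (⟨N'(t₀), T₀(t₀)⟩ / sin θ(t₀)) · T₀(t₀) at every t₀ (equivalently, in the paper's notation, D_V n = −(II(V, T₀)/sin θ) T₀). -/
open scoped InnerProductSpace
open Real

/-! Write `c = ⟨N, h⟩` and `s = sin θ = √(1 - c²)`. Differentiating `n = (N - c h) / s` gives
`n' = (N' - c' h) / s + (c c' / s³) (N - c h)`. On the other hand `N - c h` and `N × h` are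
orthogonal of length `s` and span `h^⊥`, and `N' ⊥ N` since `‖N‖ = 1`; expanding `N' - c' h` in
this basis gives `⟨N', N × h⟩ (N × h) = s² N' - c' h + c c' N`, which is `s³ n'`. -/

theorem HasDerivAt.inner_eq_zero_of_forall_norm_eq {E : Type*} [NormedAddCommGroup E]
    [InnerProductSpace ℝ E] {N : ℝ → E} {N' : E} {t r : ℝ} (hN : HasDerivAt N N' t)
    (hr : ∀ s, ‖N s‖ = r) : ⟪N t, N'⟫_ℝ = 0 := by
  have hconst : (‖N ·‖ ^ 2) = fun _ => r ^ 2 := funext fun s => by rw [hr]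
  have h2 : 2 * ⟪N t, N'⟫_ℝ = 0 := hN.norm_sq.unique (hconst ▸ hasDerivAt_const t (r ^ 2))
  exact (mul_eq_zero.mp h2).resolve_left two_ne_zero

section HorizontalNormal

variable {E : Type*} [NormedAddCommGroup E] [InnerProductSpace ℝ E]

noncomputable def horizontalNormal (h N : E) : E :=
  (√(1 - ⟪N, h⟫_ℝ ^ 2))⁻¹ • (N - ⟪N, h⟫_ℝ • h)

theorem HasDerivAt.horizontalNormal {h : E} {N : ℝ → E} {N' : E} {t : ℝ}
    (hN : HasDerivAt N N' t) (hNh : ⟪N t, h⟫_ℝ ^ 2 < 1) :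
    HasDerivAt (fun t => horizontalNormal h (N t))
      ((√(1 - ⟪N t, h⟫_ℝ ^ 2))⁻¹ • (N' - ⟪N', h⟫_ℝ • h) +
        (⟪N t, h⟫_ℝ * ⟪N', h⟫_ℝ / √(1 - ⟪N t, h⟫_ℝ ^ 2) ^ 3) • (N t - ⟪N t, h⟫_ℝ • h)) t := by
  have hs : √(1 - ⟪N t, h⟫_ℝ ^ 2) ≠ 0 := (Real.sqrt_pos.mpr (by linarith)).ne'
  have hc : HasDerivAt (fun t => ⟪N t, h⟫_ℝ) ⟪N', h⟫_ℝ t := by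
    simpa using hN.inner ℝ (hasDerivAt_const t h)
  have hsqrt := ((hc.pow 2).const_sub 1).sqrt (by linarith : 1 - ⟪N t, h⟫_ℝ ^ 2 ≠ 0)
  refine ((hsqrt.inv hs).smul (hN.sub (hc.smul_const h))).congr_deriv ?_
  simp only [Pi.inv_apply, Pi.pow_apply, Pi.sub_apply]
  congr 2
  field_simp
  norm_num
  ring

end HorizontalNormal

theorem inner_cross3_smul_cross3 (u v w : EuclideanSpace ℝ (Fin 3)) :
    ⟪w, cross3 u v⟫_ℝ • cross3 u v =
      (‖u‖ ^ 2 * ‖v‖ ^ 2 - ⟪u, v⟫_ℝ ^ 2) • w - ⟪w, v⟫_ℝ • (‖u‖ ^ 2 • v - ⟪u, v⟫_ℝ • u)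
        + ⟪w, u⟫_ℝ • (⟪u, v⟫_ℝ • v - ‖v‖ ^ 2 • u) := by
  ext i
  fin_cases i <;>
    simp only [cross3, Fin.isValue, WithLp.equiv_symm_apply, PiLp.inner_apply, RCLike.inner_apply,
      ringHom_apply, Fin.sum_univ_three, Matrix.cons_val_zero, Matrix.cons_val_one, Matrix.cons_val,
      Fin.zero_eta, Fin.mk_one, Fin.reduceFinMk, PiLp.smul_apply, smul_eq_mul,
      EuclideanSpace.real_norm_sq_eq, PiLp.add_apply, PiLp.sub_apply] <;>
    ring

theorem inner_smul_cross3_div_smul_smul_cross3 {N h V : EuclideanSpace ℝ (Fin 3)} {s : ℝ}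
    (hN : ‖N‖ = 1) (hh : ‖h‖ = 1) (hV : ⟪N, V⟫_ℝ = 0) (hs : s ^ 2 = 1 - ⟪N, h⟫_ℝ ^ 2)
    (hs0 : s ≠ 0) :
    (⟪V, s⁻¹ • cross3 N h⟫_ℝ / s) • (s⁻¹ • cross3 N h) =
      s⁻¹ • (V - ⟪V, h⟫_ℝ • h) + (⟪N, h⟫_ℝ * ⟪V, h⟫_ℝ / s ^ 3) • (N - ⟪N, h⟫_ℝ • h) := by
  have hcross : ⟪V, cross3 N h⟫_ℝ • cross3 N h =
      s ^ 2 • V - ⟪V, h⟫_ℝ • h + (⟪N, h⟫_ℝ * ⟪V, h⟫_ℝ) • N := by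
    rw [inner_cross3_smul_cross3, hN, hh, real_inner_comm N V, hV, hs]
    module
  calc (⟪V, s⁻¹ • cross3 N h⟫_ℝ / s) • (s⁻¹ • cross3 N h)
      = (s ^ 3)⁻¹ • (⟪V, cross3 N h⟫_ℝ • cross3 N h) := by
        rw [real_inner_smul_right, smul_smul, smul_smul]
        congr 1
        ring
    _ = _ := by
        rw [hcross]
        match_scalars <;> field_simp
        linear_combination ⟪V, h⟫_ℝ * hs

theorem deriv_horizontal_normal_eq_general
    (h : EuclideanSpace ℝ (Fin 3)) (hh : ‖h‖ = 1)
    (N : ℝ → EuclideanSpace ℝ (Fin 3)) (hND : Differentiable ℝ N)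
    (hNu : ∀ t, ‖N t‖ = 1) (hNh : ∀ t, |⟪N t, h⟫_ℝ| < 1)
    (θ : ℝ → ℝ) (hθ : ∀ t, θ t = Real.arccos ⟪N t, h⟫_ℝ)
    (T₀ : ℝ → EuclideanSpace ℝ (Fin 3))
    (hT₀ : ∀ t, T₀ t = (Real.sin (θ t))⁻¹ • cross3 (N t) h)
    (n : ℝ → EuclideanSpace ℝ (Fin 3))
    (hn : ∀ t, n t = (Real.sin (θ t))⁻¹ • (N t - Real.cos (θ t) • h)) :
    Differentiable ℝ n ∧
    ∀ t₀, deriv n t₀ = (⟪deriv N t₀, T₀ t₀⟫_ℝ / Real.sin (θ t₀)) • T₀ t₀ := by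
  have hNh' t : ⟪N t, h⟫_ℝ ^ 2 < 1 := sq_lt_one_iff_abs_lt_one _ |>.mpr (hNh t)
  have hcos t : cos (θ t) = ⟪N t, h⟫_ℝ := by
    rw [hθ, cos_arccos (neg_le_of_abs_le (hNh t).le) (le_of_abs_le (hNh t).le)]
  have hsin t : sin (θ t) = √(1 - ⟪N t, h⟫_ℝ ^ 2) := by rw [hθ, sin_arccos]
  have hn' : n = fun t => horizontalNormal h (N t) := by
    funext t
    rw [hn, hcos, hsin, horizontalNormal]
  have hderiv t₀ : HasDerivAt n ((⟪deriv N t₀, T₀ t₀⟫_ℝ / sin (θ t₀)) • T₀ t₀) t₀ := by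
    have hN := (hND t₀).hasDerivAt
    rw [hT₀, hsin, inner_smul_cross3_div_smul_smul_cross3 (hNu t₀) hh
      (hN.inner_eq_zero_of_forall_norm_eq hNu) (sq_sqrt (by linarith [hNh' t₀]))
      (sqrt_pos.mpr (by linarith [hNh' t₀])).ne', hn']
    exact hN.horizontalNormal (hNh' t₀)
  exact ⟨fun t => (hderiv t).differentiableAt, fun t => (hderiv t).deriv⟩

/-- the horizontal normal n(t) is differentiable with
n'(t₀) = (⟨N'(t₀), T₀(t₀)⟩ / sin θ(t₀)) · T₀(t₀)
(i.e., D_V n = −(II(V, T₀)/sin θ) T₀). -/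
theorem deriv_horizontal_normal_eq
    (h : EuclideanSpace ℝ (Fin 3)) (hh : ‖h‖ = 1)
    (N : ℝ → EuclideanSpace ℝ (Fin 3)) (hND : Differentiable ℝ N)
    (hNu : ∀ t, ‖N t‖ = 1) (hNh : ∀ t, |⟪N t, h⟫_ℝ| < 1)
    (θ : ℝ → ℝ) (hθ : ∀ t, θ t = Real.arccos ⟪N t, h⟫_ℝ)
    (T₀ : ℝ → EuclideanSpace ℝ (Fin 3))
    (hT₀ : ∀ t, T₀ t = (Real.sin (θ t))⁻¹ • cross3 (N t) h)
    (Tperp : ℝ → EuclideanSpace ℝ (Fin 3))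
    (hTp : ∀ t, Tperp t = cross3 (N t) (T₀ t))
    (n : ℝ → EuclideanSpace ℝ (Fin 3))
    (hn : ∀ t, n t = (Real.sin (θ t))⁻¹ • (N t - Real.cos (θ t) • h)) :
    Differentiable ℝ n ∧
    ∀ t₀, deriv n t₀ = (⟪deriv N t₀, T₀ t₀⟫_ℝ / Real.sin (θ t₀)) • T₀ t₀ :=
  deriv_horizontal_normal_eq_general h hh N hND hNu hNh θ hθ T₀ hT₀ n hn
end

section
/- Under the moving-frame hypotheses, the slice tangent T₀(t) is differentiable and its derivative satisfies T₀'(t₀) = −(⟨N'(t₀), T₀(t₀)⟩ / sin θ(t₀)) · n(t₀) at every t₀ (equivalently, in the paper's notation, D_V T₀ = (II(V, T₀)/sin θ) n). -/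
/-!
The orthogonality relations of the frame reduce the claim to one polynomial identity in ℝ³:
for `P = N × h`,
`|P|² (v × h) + ⟨N, h⟩⟨v, h⟩ P + ⟨v, P⟩ (h × P) = ⟨N, v⟩ |h|² P`,
which can be checked by pairing both sides with the orthogonal frame `P, h, h × P`.
Differentiating `T₀ = (1 - ⟨N, h⟩²)^(-1/2) (N × h)` gives
`T₀' = s⁻¹ (N' × h) + (⟨N, h⟩⟨N', h⟩ / s³) (N × h)` with `s = sin θ`; since `N' ⊥ N` for a unit
curve, the identity with `v = N'` turns this into `-(⟨N', N × h⟩ / s³) (N - ⟨N, h⟩ h)`.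
-/

open scoped InnerProductSpace
open Real

local notation "E³" => EuclideanSpace ℝ (Fin 3)

noncomputable def cross3Right (b : E³) : E³ →L[ℝ] E³ :=
  LinearMap.toContinuousLinearMap <|
    (WithLp.linearEquiv 2 ℝ (Fin 3 → ℝ)).symm.toLinearMap ∘ₗ
      (crossProduct.flip (WithLp.ofLp b)) ∘ₗ (WithLp.linearEquiv 2 ℝ (Fin 3 → ℝ)).toLinearMap

theorem cross3_apply (a b : E³) (i : Fin 3) :
    cross3 a b i = ![a 1 * b 2 - a 2 * b 1, a 2 * b 0 - a 0 * b 2, a 0 * b 1 - a 1 * b 0] i := rfl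

theorem inner_eq_sum_fin_three (x y : E³) : ⟪x, y⟫_ℝ = x 0 * y 0 + x 1 * y 1 + x 2 * y 2 := by
  simp [PiLp.inner_apply, Fin.sum_univ_three, mul_comm]

theorem cross3_frame_identity (N v h : E³) :
    (⟪N, N⟫_ℝ * ⟪h, h⟫_ℝ - ⟪N, h⟫_ℝ ^ 2) • cross3 v h + (⟪N, h⟫_ℝ * ⟪v, h⟫_ℝ) • cross3 N h
      + ⟪v, cross3 N h⟫_ℝ • (⟪h, h⟫_ℝ • N - ⟪N, h⟫_ℝ • h) = (⟪N, v⟫_ℝ * ⟪h, h⟫_ℝ) • cross3 N h := by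
  simp only [inner_eq_sum_fin_three]
  ext i
  fin_cases i <;> simp [cross3_apply] <;> ring

theorem HasDerivAt.cross3_const {N : ℝ → E³} {N' : E³} {t : ℝ} (hN : HasDerivAt N N' t)
    (b : E³) : HasDerivAt (fun s => cross3 (N s) b) (cross3 N' b) t :=
  (cross3Right b).hasFDerivAt.comp_hasDerivAt t hN

theorem HasDerivAt.inner_eq_zero_of_norm_eq {E : Type*} [NormedAddCommGroup E]
    [InnerProductSpace ℝ E] {N : ℝ → E} {N' : E} {t r : ℝ} (hN : HasDerivAt N N' t)
    (hNr : ∀ s, ‖N s‖ = r) : ⟪N t, N'⟫_ℝ = 0 := by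
  have hconst : HasDerivAt (fun s => ⟪N s, N s⟫_ℝ) 0 t := by
    simpa only [real_inner_self_eq_norm_sq, hNr] using hasDerivAt_const t (r ^ 2)
  linarith [(hN.inner ℝ hN).unique hconst, real_inner_comm N' (N t)]

theorem HasDerivAt.inv_sqrt_one_sub_sq {c : ℝ → ℝ} {c' t : ℝ} (hc : HasDerivAt c c' t)
    (hct : c t ^ 2 < 1) :
    HasDerivAt (fun s => (√(1 - c s ^ 2))⁻¹) (c t * c' / √(1 - c t ^ 2) ^ 3) t := by
  have hpos : 0 < 1 - c t ^ 2 := by linarith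
  have hsqrt : 0 < √(1 - c t ^ 2) := Real.sqrt_pos.2 hpos
  refine (((hasDerivAt_const t 1).fun_sub (hc.fun_pow 2)).sqrt hpos.ne').inv hsqrt.ne'
    |>.congr_deriv ?_
  field_simp
  ring

theorem hasDerivAt_sliceTangent {N : ℝ → E³} {N' h : E³} {t : ℝ} (hN : HasDerivAt N N' t)
    (hNh : |⟪N t, h⟫_ℝ| < 1) :
    HasDerivAt (fun s => (√(1 - ⟪N s, h⟫_ℝ ^ 2))⁻¹ • cross3 (N s) h)
      ((√(1 - ⟪N t, h⟫_ℝ ^ 2))⁻¹ • cross3 N' h +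
        (⟪N t, h⟫_ℝ * ⟪N', h⟫_ℝ / √(1 - ⟪N t, h⟫_ℝ ^ 2) ^ 3) • cross3 (N t) h) t := by
  have hc : HasDerivAt (fun s => ⟪N s, h⟫_ℝ) ⟪N', h⟫_ℝ t := by
    simpa using hN.inner ℝ (hasDerivAt_const t h)
  exact (hc.inv_sqrt_one_sub_sq (sq_lt_one_iff_abs_lt_one _ |>.2 hNh)).smul (hN.cross3_const h)

theorem cross3_frame_identity_of_unit {N v h : E³} (hN : ‖N‖ = 1) (hh : ‖h‖ = 1)
    (hv : ⟪N, v⟫_ℝ = 0) {s : ℝ} (hs : s ^ 2 = 1 - ⟪N, h⟫_ℝ ^ 2) (hs0 : s ≠ 0) :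
    s⁻¹ • cross3 v h + (⟪N, h⟫_ℝ * ⟪v, h⟫_ℝ / s ^ 3) • cross3 N h =
      -(⟪v, s⁻¹ • cross3 N h⟫_ℝ / s) • (s⁻¹ • (N - ⟪N, h⟫_ℝ • h)) := by
  have key := cross3_frame_identity N v h
  simp only [real_inner_self_eq_norm_sq, hN, hh, hv, one_pow, mul_one, one_smul, ← hs] at key
  rw [real_inner_smul_right]
  linear_combination (norm := skip) (s ^ 3)⁻¹ • key
  match_scalars <;> field_simp <;> ring

theorem deriv_slice_tangent_eq_general
    (h : EuclideanSpace ℝ (Fin 3)) (hh : ‖h‖ = 1)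
    (N : ℝ → EuclideanSpace ℝ (Fin 3)) (hND : Differentiable ℝ N)
    (hNu : ∀ t, ‖N t‖ = 1) (hNh : ∀ t, |⟪N t, h⟫_ℝ| < 1)
    (θ : ℝ → ℝ) (hθ : ∀ t, θ t = Real.arccos ⟪N t, h⟫_ℝ)
    (T₀ : ℝ → EuclideanSpace ℝ (Fin 3))
    (hT₀ : ∀ t, T₀ t = (Real.sin (θ t))⁻¹ • cross3 (N t) h)
    (n : ℝ → EuclideanSpace ℝ (Fin 3))
    (hn : ∀ t, n t = (Real.sin (θ t))⁻¹ • (N t - Real.cos (θ t) • h)) :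
    Differentiable ℝ T₀ ∧
    ∀ t₀, deriv T₀ t₀ = -(⟪deriv N t₀, T₀ t₀⟫_ℝ / Real.sin (θ t₀)) • n t₀ := by
  have hsin (t : ℝ) : Real.sin (θ t) = √(1 - ⟪N t, h⟫_ℝ ^ 2) := by rw [hθ, Real.sin_arccos]
  have hT₀_eq : T₀ = fun t => (√(1 - ⟪N t, h⟫_ℝ ^ 2))⁻¹ • cross3 (N t) h :=
    funext fun t => by rw [hT₀, hsin]
  have hderiv (t : ℝ) := hT₀_eq ▸ hasDerivAt_sliceTangent (hND t).hasDerivAt (hNh t)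
  refine ⟨fun t => (hderiv t).differentiableAt, fun t => ?_⟩
  obtain ⟨hlow, hup⟩ := abs_lt.1 (hNh t)
  have hpos : 0 < 1 - ⟪N t, h⟫_ℝ ^ 2 := by nlinarith
  have hcos : Real.cos (θ t) = ⟪N t, h⟫_ℝ := by rw [hθ, Real.cos_arccos hlow.le hup.le]
  rw [(hderiv t).deriv, hn, hT₀, hsin, hcos]
  have hNN' : ⟪N t, deriv N t⟫_ℝ = 0 := (hND t).hasDerivAt.inner_eq_zero_of_norm_eq hNu
  exact cross3_frame_identity_of_unit (hNu t) hh hNN' (Real.sq_sqrt hpos.le)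
    (Real.sqrt_pos.2 hpos).ne'

/-- the slice tangent T₀(t) is differentiable with
T₀'(t₀) = −(⟨N'(t₀), T₀(t₀)⟩ / sin θ(t₀)) · n(t₀)
(i.e., D_V T₀ = (II(V, T₀)/sin θ) n). -/
theorem deriv_slice_tangent_eq
    (h : EuclideanSpace ℝ (Fin 3)) (hh : ‖h‖ = 1)
    (N : ℝ → EuclideanSpace ℝ (Fin 3)) (hND : Differentiable ℝ N)
    (hNu : ∀ t, ‖N t‖ = 1) (hNh : ∀ t, |⟪N t, h⟫_ℝ| < 1)
    (θ : ℝ → ℝ) (hθ : ∀ t, θ t = Real.arccos ⟪N t, h⟫_ℝ)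
    (T₀ : ℝ → EuclideanSpace ℝ (Fin 3))
    (hT₀ : ∀ t, T₀ t = (Real.sin (θ t))⁻¹ • cross3 (N t) h)
    (Tperp : ℝ → EuclideanSpace ℝ (Fin 3))
    (hTp : ∀ t, Tperp t = cross3 (N t) (T₀ t))
    (n : ℝ → EuclideanSpace ℝ (Fin 3))
    (hn : ∀ t, n t = (Real.sin (θ t))⁻¹ • (N t - Real.cos (θ t) • h)) :
    Differentiable ℝ T₀ ∧
    ∀ t₀, deriv T₀ t₀ = -(⟪deriv N t₀, T₀ t₀⟫_ℝ / Real.sin (θ t₀)) • n t₀ :=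
  deriv_slice_tangent_eq_general h hh N hND hNu hNh θ hθ T₀ hT₀ n hn
end

section
/- Let N and h be unit vectors in ℝ³ and θ ∈ (0, π) with ⟨N, h⟩ = cos θ, and let T₀, T⊥, n be the associated frame vectors. Let i be a unit vector and α ∈ (0, π) with ⟨i, h⟩ = cos α; define i⊥ₕ := (h − cos α · i)/sin α and i⊥⊥ := i⊥ₕ × i. Then: (a) i⊥⊥ = (h × i)/sin α; (b) ⟨i⊥ₕ, n⟩ = −cot α · ⟨i, n⟩; (c) ⟨i⊥⊥, n⟩ = ⟨i, T₀⟩/sin α; (d) ⟨i, N⟩ = sin θ · ⟨i, n⟩ + cos θ · ⟨i, h⟩. -/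
/-!
Everything follows from three facts about the surface frame: `h ⟂ n` (because `‖h‖ = 1` and
`⟪N, h⟫ = cos θ`), `N = sin θ • n + cos θ • h`, and `n × h = T₀` (as `h × h = 0`).
Identity (a) is `i × i = 0`, (b) is `h ⟂ n`, and (c) is the triple product
`⟪h × i, n⟫ = ⟪i, n × h⟫ = ⟪i, T₀⟫`.
-/

open scoped InnerProductSpace
open Real

section Frame

variable {E : Type*} [NormedAddCommGroup E] [InnerProductSpace ℝ E]

theorem inner_sub_inner_smul_self_of_norm_eq_one {h : E} (hh : ‖h‖ = 1) (v : E) :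
    ⟪h, v - ⟪v, h⟫_ℝ • h⟫_ℝ = 0 := by
  rw [inner_sub_right, inner_smul_right, real_inner_self_eq_norm_sq, hh, real_inner_comm]
  ring

theorem eq_smul_add_smul_of_eq_inv_smul_sub {s c : ℝ} (hs : s ≠ 0) {v w n : E}
    (hn : n = s⁻¹ • (v - c • w)) : v = s • n + c • w := by
  rw [hn, smul_inv_smul₀ hs, sub_add_cancel]

end Frame

section Cross

open scoped Matrix

variable (a b c : EuclideanSpace ℝ (Fin 3))

theorem cross3_eq_crossProduct : cross3 a b = WithLp.toLp 2 (a.ofLp ⨯₃ b.ofLp) := by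
  rw [cross3, cross_apply]
  rfl

theorem cross3_self : cross3 a a = 0 := by
  rw [cross3_eq_crossProduct, cross_self]
  rfl

theorem cross3_sub_left : cross3 (a - b) c = cross3 a c - cross3 b c := by
  simp only [cross3_eq_crossProduct, WithLp.ofLp_sub, map_sub, LinearMap.sub_apply,
    WithLp.toLp_sub]

theorem cross3_smul_left (s : ℝ) : cross3 (s • a) b = s • cross3 a b := by
  simp only [cross3_eq_crossProduct, WithLp.ofLp_smul, map_smul, LinearMap.smul_apply,
    WithLp.toLp_smul]

theorem cross3_smul_sub_smul_self_left (s t : ℝ) :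
    cross3 (s • (a - t • b)) b = s • cross3 a b := by
  rw [cross3_smul_left, cross3_sub_left, cross3_smul_left, cross3_self, smul_zero, sub_zero]

theorem inner_cross3_left : ⟪cross3 a b, c⟫_ℝ = ⟪b, cross3 c a⟫_ℝ := by
  simp only [cross3_eq_crossProduct, EuclideanSpace.inner_eq_star_dotProduct, star_trivial]
  rw [dotProduct_comm _ b.ofLp, triple_product_permutation b.ofLp]

end Cross

theorem heading_frame_identities_general
    (N h : EuclideanSpace ℝ (Fin 3)) (θ : ℝ)
    (hh : ‖h‖ = 1) (hθ : θ ∈ Set.Ioo (0 : ℝ) π)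
    (hNh : ⟪N, h⟫_ℝ = Real.cos θ)
    (T₀ n : EuclideanSpace ℝ (Fin 3))
    (hT₀ : T₀ = (Real.sin θ)⁻¹ • cross3 N h)
    (hn : n = (Real.sin θ)⁻¹ • (N - Real.cos θ • h))
    (i : EuclideanSpace ℝ (Fin 3)) (α : ℝ)
    (iperph iperpperp : EuclideanSpace ℝ (Fin 3))
    (hiperph : iperph = (Real.sin α)⁻¹ • (h - Real.cos α • i))
    (hiperpperp : iperpperp = cross3 iperph i) :
    iperpperp = (Real.sin α)⁻¹ • cross3 h i ∧
    ⟪iperph, n⟫_ℝ = -(Real.cos α / Real.sin α) * ⟪i, n⟫_ℝ ∧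
    ⟪iperpperp, n⟫_ℝ = ⟪i, T₀⟫_ℝ / Real.sin α ∧
    ⟪i, N⟫_ℝ = Real.sin θ * ⟪i, n⟫_ℝ + Real.cos θ * ⟪i, h⟫_ℝ := by
  have hperp : iperpperp = (Real.sin α)⁻¹ • cross3 h i := by
    rw [hiperpperp, hiperph, cross3_smul_sub_smul_self_left]
  have hh_n : ⟪h, n⟫_ℝ = 0 := by
    rw [hn, inner_smul_right, ← hNh, inner_sub_inner_smul_self_of_norm_eq_one hh, mul_zero]
  have hT₀_cross : T₀ = cross3 n h := by
    rw [hT₀, hn, cross3_smul_sub_smul_self_left]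
  have hsθ : Real.sin θ ≠ 0 := (Real.sin_pos_of_pos_of_lt_pi hθ.1 hθ.2).ne'
  refine ⟨hperp, ?_, ?_, ?_⟩
  · rw [hiperph, inner_smul_left, inner_sub_left, inner_smul_left, hh_n]
    simp only [conj_trivial]
    ring
  · rw [hperp, inner_smul_left, inner_cross3_left, ← hT₀_cross, conj_trivial, inv_mul_eq_div]
  · conv_lhs => rw [eq_smul_add_smul_of_eq_inv_smul_sub hsθ hn]
    rw [inner_add_right, inner_smul_right, inner_smul_right]

/-- identities relating the heading frame (i⊥ₕ, i⊥⊥) to the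
surface frame (T₀, Tperp, n, N). -/
theorem heading_frame_identities
    (N h : EuclideanSpace ℝ (Fin 3)) (θ : ℝ)
    (hN : ‖N‖ = 1) (hh : ‖h‖ = 1) (hθ : θ ∈ Set.Ioo (0 : ℝ) π)
    (hNh : ⟪N, h⟫_ℝ = Real.cos θ)
    (T₀ Tperp n : EuclideanSpace ℝ (Fin 3))
    (hT₀ : T₀ = (Real.sin θ)⁻¹ • cross3 N h)
    (hTperp : Tperp = cross3 N T₀)
    (hn : n = (Real.sin θ)⁻¹ • (N - Real.cos θ • h))
    (i : EuclideanSpace ℝ (Fin 3)) (α : ℝ)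
    (hi : ‖i‖ = 1) (hα : α ∈ Set.Ioo (0 : ℝ) π)
    (hih : ⟪i, h⟫_ℝ = Real.cos α)
    (iperph iperpperp : EuclideanSpace ℝ (Fin 3))
    (hiperph : iperph = (Real.sin α)⁻¹ • (h - Real.cos α • i))
    (hiperpperp : iperpperp = cross3 iperph i) :
    iperpperp = (Real.sin α)⁻¹ • cross3 h i ∧
    ⟪iperph, n⟫_ℝ = -(Real.cos α / Real.sin α) * ⟪i, n⟫_ℝ ∧
    ⟪iperpperp, n⟫_ℝ = ⟪i, T₀⟫_ℝ / Real.sin α ∧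
    ⟪i, N⟫_ℝ = Real.sin θ * ⟪i, n⟫_ℝ + Real.cos θ * ⟪i, h⟫_ℝ :=
  heading_frame_identities_general N h θ hh hθ hNh T₀ n hT₀ hn i α iperph iperpperp hiperph
    hiperpperp
end

section
/- Let ρ : ℝ → ℝ be differentiable with ρ(h) > 0 for all h, fix h₀ ∈ ℝ, and define the unit-speed horizontal slice circle c(s) := (ρ(h₀) cos(s/ρ(h₀)), ρ(h₀) sin(s/ρ(h₀)), h₀) and along it the normal curve Nc(s) := −(1 + ρ'(h₀)²)^(−1/2) · (cos(s/ρ(h₀)), sin(s/ρ(h₀)), −ρ'(h₀)) and the meridian unit tangent T⊥(s) := (1 + ρ'(h₀)²)^(−1/2) · (ρ'(h₀) cos(s/ρ(h₀)), ρ'(h₀) sin(s/ρ(h₀)), 1). Then ‖c'(s)‖ = 1 for all s, and for all s: −⟨Nc'(s), c'(s)⟩ = 1/(ρ(h₀) √(1 + ρ'(h₀)²)) = cos(arctan ρ'(h₀))/ρ(h₀), and ⟨Nc'(s), T⊥(s)⟩ = 0. -/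
open scoped InnerProductSpace
open Real

/-!
The slice circle `c` has velocity `u(s) = (-sin (s/ρ), cos (s/ρ), 0)`, a horizontal unit vector
orthogonal to the meridian plane through `c s`. The normal `Nc` is `-(1 + ρ'²)^(-1/2)` times the
radial direction plus a constant vertical part, so differentiating gives the Weingarten relation
`Nc' = -κ c'` with `κ = 1 / (ρ √(1 + ρ'²)) = cos (arctan ρ') / ρ`. Hence `-⟪Nc', c'⟫ = κ ‖c'‖² = κ`,
and `⟪Nc', T⊥⟫ = 0` because `T⊥` lies in the meridian plane.
-/

theorem hasDerivAt_toLp_mul_cos_mul_sin (a b r s : ℝ) :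
    HasDerivAt
      (fun t => WithLp.toLp 2 ![a * cos (t / r), a * sin (t / r), b] : ℝ → EuclideanSpace ℝ (Fin 3))
      ((a / r) • WithLp.toLp 2 ![-sin (s / r), cos (s / r), 0]) s := by
  have hθ : HasDerivAt (fun t => t / r) r⁻¹ s := by
    simpa using (hasDerivAt_id s).div_const r
  have hF : HasDerivAt (fun t => ![a * cos (t / r), a * sin (t / r), b])
      ((a / r) • ![-sin (s / r), cos (s / r), 0]) s := by
    refine hasDerivAt_pi.2 fun i => ?_
    fin_cases i <;>
      simp only [Fin.zero_eta, Fin.mk_one, Fin.reduceFinMk, Fin.isValue, Matrix.cons_val_zero,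
        Matrix.cons_val_one, Matrix.cons_val, Pi.smul_apply, smul_eq_mul, mul_neg, mul_zero]
    · exact (((hasDerivAt_cos _).comp s hθ).const_mul a).congr_deriv (by ring)
    · exact (((hasDerivAt_sin _).comp s hθ).const_mul a).congr_deriv (by ring)
    · exact hasDerivAt_const s b
  exact (PiLp.hasFDerivAt_toLp 2 _).comp_hasDerivAt s hF

theorem norm_toLp_neg_sin_cos_zero (θ : ℝ) :
    ‖(WithLp.toLp 2 ![-sin θ, cos θ, 0] : EuclideanSpace ℝ (Fin 3))‖ = 1 := by
  simp [EuclideanSpace.norm_eq, Fin.sum_univ_three]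

theorem inner_toLp_neg_sin_cos_zero_toLp_mul_cos_mul_sin (θ a b : ℝ) :
    ⟪(WithLp.toLp 2 ![-sin θ, cos θ, 0] : EuclideanSpace ℝ (Fin 3)),
      WithLp.toLp 2 ![a * cos θ, a * sin θ, b]⟫_ℝ = 0 := by
  simp [EuclideanSpace.inner_eq_star_dotProduct, dotProduct, Fin.sum_univ_three]
  ring

theorem surface_of_revolution_slice_curvature_general
    (ρ : ℝ → ℝ) (hρpos : ∀ h, 0 < ρ h) (h₀ : ℝ)
    (c : ℝ → EuclideanSpace ℝ (Fin 3))
    (hc : ∀ s, c s = (WithLp.equiv 2 (Fin 3 → ℝ)).symm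
      ![ρ h₀ * Real.cos (s / ρ h₀), ρ h₀ * Real.sin (s / ρ h₀), h₀])
    (Nc : ℝ → EuclideanSpace ℝ (Fin 3))
    (hNc : ∀ s, Nc s = -(Real.sqrt (1 + deriv ρ h₀ ^ 2))⁻¹ •
      (WithLp.equiv 2 (Fin 3 → ℝ)).symm
        ![Real.cos (s / ρ h₀), Real.sin (s / ρ h₀), -(deriv ρ h₀)])
    (Tperp : ℝ → EuclideanSpace ℝ (Fin 3))
    (hTperp : ∀ s, Tperp s = (Real.sqrt (1 + deriv ρ h₀ ^ 2))⁻¹ •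
      (WithLp.equiv 2 (Fin 3 → ℝ)).symm
        ![deriv ρ h₀ * Real.cos (s / ρ h₀), deriv ρ h₀ * Real.sin (s / ρ h₀), 1]) :
    (∀ s, ‖deriv c s‖ = 1) ∧
    (∀ s, -⟪deriv Nc s, deriv c s⟫_ℝ = 1 / (ρ h₀ * Real.sqrt (1 + deriv ρ h₀ ^ 2))) ∧
    (∀ s, -⟪deriv Nc s, deriv c s⟫_ℝ = Real.cos (Real.arctan (deriv ρ h₀)) / ρ h₀) ∧
    (∀ s, ⟪deriv Nc s, Tperp s⟫_ℝ = 0) := by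
  set r := ρ h₀
  set k := deriv ρ h₀
  have hr : r ≠ 0 := (hρpos h₀).ne'
  set u : ℝ → EuclideanSpace ℝ (Fin 3) := fun s => WithLp.toLp 2 ![-sin (s / r), cos (s / r), 0]
  have hc' : ∀ s, deriv c s = u s := fun s => by
    simp only [funext hc, WithLp.equiv_symm_apply]
    simpa [div_self hr] using (hasDerivAt_toLp_mul_cos_mul_sin r h₀ r s).deriv
  have hNc' : ∀ s, deriv Nc s = -(r * √(1 + k ^ 2))⁻¹ • u s := fun s => by
    simp only [funext hNc, WithLp.equiv_symm_apply]
    have h : HasDerivAt (fun t => -(√(1 + k ^ 2))⁻¹ •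
        WithLp.toLp 2 ![cos (t / r), sin (t / r), -k] : ℝ → EuclideanSpace ℝ (Fin 3))
        (-(√(1 + k ^ 2))⁻¹ • (1 / r) • u s) s := by
      have h₁ := (hasDerivAt_toLp_mul_cos_mul_sin 1 (-k) r s).const_smul (-(√(1 + k ^ 2))⁻¹)
      simp only [one_mul] at h₁
      exact h₁
    rw [h.deriv, smul_smul]
    congr 1
    field_simp
  have hκ : ∀ s, -⟪deriv Nc s, deriv c s⟫_ℝ = (r * √(1 + k ^ 2))⁻¹ := fun s => by
    rw [hc', hNc', real_inner_smul_left, real_inner_self_eq_norm_sq,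
      norm_toLp_neg_sin_cos_zero]
    ring
  refine ⟨fun s => ?_, fun s => ?_, fun s => ?_, fun s => ?_⟩
  · rw [hc']; exact norm_toLp_neg_sin_cos_zero _
  · rw [hκ, one_div]
  · rw [hκ, cos_arctan]; field_simp
  · rw [hNc', hTperp, real_inner_smul_left, WithLp.equiv_symm_apply, inner_smul_right,
      inner_toLp_neg_sin_cos_zero_toLp_mul_cos_mul_sin]
    simp

/-- along a horizontal slice of a surface of revolution, the
slice circle c is unit speed, II(T₀,T₀) = −⟨Nc', c'⟩ = cos(arctan ρ')/ρ and
II(T₀,Tperp) = ⟨Nc', Tperp⟩ = 0. -/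
theorem surface_of_revolution_slice_curvature
    (ρ : ℝ → ℝ) (hρd : Differentiable ℝ ρ) (hρpos : ∀ h, 0 < ρ h) (h₀ : ℝ)
    (c : ℝ → EuclideanSpace ℝ (Fin 3))
    (hc : ∀ s, c s = (WithLp.equiv 2 (Fin 3 → ℝ)).symm
      ![ρ h₀ * Real.cos (s / ρ h₀), ρ h₀ * Real.sin (s / ρ h₀), h₀])
    (Nc : ℝ → EuclideanSpace ℝ (Fin 3))
    (hNc : ∀ s, Nc s = -(Real.sqrt (1 + deriv ρ h₀ ^ 2))⁻¹ •
      (WithLp.equiv 2 (Fin 3 → ℝ)).symm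
        ![Real.cos (s / ρ h₀), Real.sin (s / ρ h₀), -(deriv ρ h₀)])
    (Tperp : ℝ → EuclideanSpace ℝ (Fin 3))
    (hTperp : ∀ s, Tperp s = (Real.sqrt (1 + deriv ρ h₀ ^ 2))⁻¹ •
      (WithLp.equiv 2 (Fin 3 → ℝ)).symm
        ![deriv ρ h₀ * Real.cos (s / ρ h₀), deriv ρ h₀ * Real.sin (s / ρ h₀), 1]) :
    (∀ s, ‖deriv c s‖ = 1) ∧
    (∀ s, -⟪deriv Nc s, deriv c s⟫_ℝ = 1 / (ρ h₀ * Real.sqrt (1 + deriv ρ h₀ ^ 2))) ∧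
    (∀ s, -⟪deriv Nc s, deriv c s⟫_ℝ = Real.cos (Real.arctan (deriv ρ h₀)) / ρ h₀) ∧
    (∀ s, ⟪deriv Nc s, Tperp s⟫_ℝ = 0) :=
  surface_of_revolution_slice_curvature_general ρ hρpos h₀ c hc Nc hNc Tperp hTperp
end
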